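/- arXiv:2110.15407 — 4 statements merged into one kernel-verified Lean document; each statement's English description precedes it below -/
import Mathlib

section
/- Let n ≥ 1 and set λ*_k = (binom(2n−1, 2k) · binom(2n−1, 2k+1))^{−1/2} for 0 ≤ k ≤ n−1. Then λ* is transverse to 𝐠_0: for every nonzero coefficient vector p ∈ ℂ^{2n}, Re(q_{λ*}(p, 𝐠_0 p)) > 0. -/
open Finset

/-- The ℝ-bilinear form `q_λ` on coefficient vectors of homogeneous polynomials of
degree `2n-1`: `q_λ(p,q) = (1/2) Σ_{k<n} λ_k (p_{2k} conj(q_{2k+1}) + q_{2k} conj(p_{2k+1}))`. -/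
noncomputable def qForm (n : ℕ) (lam : ℕ → ℝ) (p q : ℕ → ℂ) : ℂ :=
  (1/2) * ∑ k ∈ Finset.range n,
    (lam k : ℂ) * (p (2*k) * (starRingEnd ℂ) (q (2*k+1)) + q (2*k) * (starRingEnd ℂ) (p (2*k+1)))

/-- The operator `𝐠₀` on coefficient vectors: `(𝐠₀ p)_m = (m+1) p_{m+1} + (2n−m) p_{m−1}`,
with `p_{−1} = 0`. -/
noncomputable def gZero (n : ℕ) (p : ℕ → ℂ) : ℕ → ℂ :=
  fun m => ((m : ℂ) + 1) * p (m+1) + ((2*n : ℂ) - (m : ℂ)) * (if m = 0 then 0 else p (m-1))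

/-- The explicit weight vector `λ*_k = (binom(2n−1,2k) · binom(2n−1,2k+1))^{-1/2}`. -/
noncomputable def lamStar (n : ℕ) (k : ℕ) : ℝ :=
  (Real.sqrt ((Nat.choose (2*n-1) (2*k) * Nat.choose (2*n-1) (2*k+1) : ℕ)))⁻¹

/-- `s_j = sqrt((j+1)(2n-1-j))` -/
noncomputable def ss (n j : ℕ) : ℝ := Real.sqrt (((j+1) * (2*n-1-j) : ℕ))

/-- `1 / C(2n-1, j)` -/
noncomputable def ic (n j : ℕ) : ℝ := ((Nat.choose (2*n-1) j : ℝ))⁻¹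

lemma ss_nonneg (n j : ℕ) : 0 ≤ ss n j := Real.sqrt_nonneg _
lemma ic_nonneg (n j : ℕ) : 0 ≤ ic n j := inv_nonneg.2 (Nat.cast_nonneg _)
lemma lamStar_nonneg (n k : ℕ) : 0 ≤ lamStar n k := inv_nonneg.2 (Real.sqrt_nonneg _)

lemma ic_pos {n j : ℕ} (h : j ≤ 2*n-1) : 0 < ic n j :=
  inv_pos.2 (by exact_mod_cast Nat.choose_pos h)

lemma ss_top (n : ℕ) : ss n (2*n-1) = 0 := by
  unfold ss
  rw [show 2*n-1-(2*n-1) = 0 from by omega, mul_zero]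
  simp

lemma ss_sq {n j : ℕ} : ss n j ^ 2 = (((j+1) * (2*n-1-j) : ℕ) : ℝ) :=
  Real.sq_sqrt (by positivity)

lemma lamStar_sq (n k : ℕ) :
    lamStar n k ^ 2 = ((Nat.choose (2*n-1) (2*k) * Nat.choose (2*n-1) (2*k+1) : ℕ) : ℝ)⁻¹ := by
  unfold lamStar
  rw [inv_pow, Real.sq_sqrt (by positivity)]

lemma eq_of_sq {a b : ℝ} (ha : 0 ≤ a) (hb : 0 ≤ b) (h : a^2 = b^2) : a = b := by
  nlinarith [sq_nonneg (a - b), sq_nonneg (a + b)]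

/-- key nat identity -/
lemma keyNat (n j : ℕ) :
    Nat.choose (2*n-1) (j+1) * (j+1) = Nat.choose (2*n-1) j * (2*n-1-j) :=
  Nat.choose_succ_right_eq _ _


lemma cross_bound2 (x y : ℂ) (c u v : ℝ) (hu : 0 ≤ u) (hv : 0 ≤ v) (hc : 0 ≤ c)
    (huv : c^2 ≤ u*v) :
    -(u * Complex.normSq x + v * Complex.normSq y) ≤ 2 * (c * (x * (starRingEnd ℂ) y).re) := by
  have ha : (0:ℝ) ≤ ‖x‖ := norm_nonneg x
  have hb : (0:ℝ) ≤ ‖y‖ := norm_nonneg y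
  set a := ‖x‖ with hA
  set b := ‖y‖ with hB
  have hre : -(a*b) ≤ (x * (starRingEnd ℂ) y).re := by
    have h1 := (abs_le.1 (Complex.abs_re_le_norm (x * (starRingEnd ℂ) y))).1
    have h2 : ‖x * (starRingEnd ℂ) y‖ = a * b := by
      rw [norm_mul, Complex.norm_conj]
    linarith [h2 ▸ h1]
  have hx : Complex.normSq x = a^2 := (Complex.sq_norm x).symm
  have hy : Complex.normSq y = b^2 := (Complex.sq_norm y).symm
  have hc2 : c ≤ Real.sqrt u * Real.sqrt v := by
    rw [← Real.sqrt_mul hu]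
    exact Real.le_sqrt_of_sq_le huv
  have key : 2*(c*(a*b)) ≤ u*a^2 + v*b^2 := by
    nlinarith [sq_nonneg (Real.sqrt u * a - Real.sqrt v * b), Real.sq_sqrt hu, Real.sq_sqrt hv,
      Real.sqrt_nonneg u, Real.sqrt_nonneg v, mul_nonneg ha hb]
  rw [hx, hy]
  nlinarith [mul_le_mul_of_nonneg_left hre hc]

lemma diag1 {n k : ℕ} (hk : k < n) :
    lamStar n k * ((2*n-1-2*k : ℕ):ℝ) = ss n (2*k) * ic n (2*k) := by
  have h0 : ((Nat.choose (2*n-1) (2*k) : ℕ):ℝ) ≠ 0 := by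
    exact_mod_cast (Nat.choose_pos (by omega : 2*k ≤ 2*n-1)).ne'
  have h1 : ((Nat.choose (2*n-1) (2*k+1) : ℕ):ℝ) ≠ 0 := by
    exact_mod_cast (Nat.choose_pos (by omega : 2*k+1 ≤ 2*n-1)).ne'
  apply eq_of_sq (mul_nonneg (lamStar_nonneg _ _) (Nat.cast_nonneg _)) (mul_nonneg (ss_nonneg _ _) (ic_nonneg _ _))
  rw [mul_pow, mul_pow, lamStar_sq, ss_sq]
  unfold ic
  rw [inv_pow]
  have hnat : (2*n-1-2*k)^2 * (Nat.choose (2*n-1) (2*k))^2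
      = ((2*k+1) * (2*n-1-(2*k))) * (Nat.choose (2*n-1) (2*k) * Nat.choose (2*n-1) (2*k+1)) := by
    have h := keyNat n (2*k)
    calc (2*n-1-2*k)^2 * (Nat.choose (2*n-1) (2*k))^2
        = (Nat.choose (2*n-1) (2*k) * (2*n-1-2*k)) * ((2*n-1-2*k) * Nat.choose (2*n-1) (2*k)) := by ring
      _ = (Nat.choose (2*n-1) (2*k+1) * (2*k+1)) * ((2*n-1-2*k) * Nat.choose (2*n-1) (2*k)) := by rw [h]
      _ = ((2*k+1) * (2*n-1-(2*k))) * (Nat.choose (2*n-1) (2*k) * Nat.choose (2*n-1) (2*k+1)) := by ring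
  field_simp
  norm_cast
  linarith [hnat]

lemma diag2 {n k : ℕ} (hk : k < n) :
    lamStar n k * ((2*k+1 : ℕ):ℝ) = ss n (2*k) * ic n (2*k+1) := by
  have h0 : ((Nat.choose (2*n-1) (2*k) : ℕ):ℝ) ≠ 0 := by
    exact_mod_cast (Nat.choose_pos (by omega : 2*k ≤ 2*n-1)).ne'
  have h1 : ((Nat.choose (2*n-1) (2*k+1) : ℕ):ℝ) ≠ 0 := by
    exact_mod_cast (Nat.choose_pos (by omega : 2*k+1 ≤ 2*n-1)).ne'
  apply eq_of_sq (mul_nonneg (lamStar_nonneg _ _) (Nat.cast_nonneg _)) (mul_nonneg (ss_nonneg _ _) (ic_nonneg _ _))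
  rw [mul_pow, mul_pow, lamStar_sq, ss_sq]
  unfold ic
  rw [inv_pow]
  have hnat : (2*k+1)^2 * (Nat.choose (2*n-1) (2*k+1))^2
      = ((2*k+1) * (2*n-1-(2*k))) * (Nat.choose (2*n-1) (2*k) * Nat.choose (2*n-1) (2*k+1)) := by
    have h := keyNat n (2*k)
    calc (2*k+1)^2 * (Nat.choose (2*n-1) (2*k+1))^2
        = (Nat.choose (2*n-1) (2*k+1) * (2*k+1)) * ((2*k+1) * Nat.choose (2*n-1) (2*k+1)) := by ring
      _ = (Nat.choose (2*n-1) (2*k) * (2*n-1-2*k)) * ((2*k+1) * Nat.choose (2*n-1) (2*k+1)) := by rw [h]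
      _ = ((2*k+1) * (2*n-1-(2*k))) * (Nat.choose (2*n-1) (2*k) * Nat.choose (2*n-1) (2*k+1)) := by ring
  field_simp
  norm_cast
  linarith [hnat]

lemma crossE {n k : ℕ} (hk : k+1 < n) :
    (lamStar n k * ((2*k+2 : ℕ):ℝ))^2
      ≤ (ss n (2*k+1) * ic n (2*k)) * (ss n (2*k+1) * ic n (2*k+2)) := by
  have h0 : ((Nat.choose (2*n-1) (2*k) : ℕ):ℝ) ≠ 0 := by
    exact_mod_cast (Nat.choose_pos (by omega : 2*k ≤ 2*n-1)).ne'
  have h1 : ((Nat.choose (2*n-1) (2*k+1) : ℕ):ℝ) ≠ 0 := by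
    exact_mod_cast (Nat.choose_pos (by omega : 2*k+1 ≤ 2*n-1)).ne'
  have h2 : ((Nat.choose (2*n-1) (2*k+2) : ℕ):ℝ) ≠ 0 := by
    exact_mod_cast (Nat.choose_pos (by omega : 2*k+2 ≤ 2*n-1)).ne'
  apply le_of_eq
  rw [mul_pow, lamStar_sq, show (ss n (2*k+1) * ic n (2*k)) * (ss n (2*k+1) * ic n (2*k+2))
      = ss n (2*k+1)^2 * (ic n (2*k) * ic n (2*k+2)) from by ring, ss_sq]
  unfold ic
  have hnat : (2*k+2)^2 * (Nat.choose (2*n-1) (2*k) * Nat.choose (2*n-1) (2*k+2))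
      = ((2*k+1+1) * (2*n-1-(2*k+1))) * (Nat.choose (2*n-1) (2*k) * Nat.choose (2*n-1) (2*k+1)) := by
    have h := keyNat n (2*k+1)
    calc (2*k+2)^2 * (Nat.choose (2*n-1) (2*k) * Nat.choose (2*n-1) (2*k+2))
        = (Nat.choose (2*n-1) (2*k+1+1) * (2*k+1+1)) * ((2*k+2) * Nat.choose (2*n-1) (2*k)) := by ring
      _ = (Nat.choose (2*n-1) (2*k+1) * (2*n-1-(2*k+1))) * ((2*k+2) * Nat.choose (2*n-1) (2*k)) := by rw [h]
      _ = ((2*k+1+1) * (2*n-1-(2*k+1))) * (Nat.choose (2*n-1) (2*k) * Nat.choose (2*n-1) (2*k+1)) := by ring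
  field_simp
  norm_cast
  linarith [hnat]

lemma crossO {n k : ℕ} (hk : k < n) (hk1 : 1 ≤ k) :
    (lamStar n k * ((2*n-2*k : ℕ):ℝ))^2
      ≤ (ss n (2*k-1) * ic n (2*k-1)) * (ss n (2*k-1) * ic n (2*k+1)) := by
  have h0 : ((Nat.choose (2*n-1) (2*k) : ℕ):ℝ) ≠ 0 := by
    exact_mod_cast (Nat.choose_pos (by omega : 2*k ≤ 2*n-1)).ne'
  have h1 : ((Nat.choose (2*n-1) (2*k+1) : ℕ):ℝ) ≠ 0 := by
    exact_mod_cast (Nat.choose_pos (by omega : 2*k+1 ≤ 2*n-1)).ne'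
  have hm : ((Nat.choose (2*n-1) (2*k-1) : ℕ):ℝ) ≠ 0 := by
    exact_mod_cast (Nat.choose_pos (by omega : 2*k-1 ≤ 2*n-1)).ne'
  apply le_of_eq
  rw [mul_pow, lamStar_sq, show (ss n (2*k-1) * ic n (2*k-1)) * (ss n (2*k-1) * ic n (2*k+1))
      = ss n (2*k-1)^2 * (ic n (2*k-1) * ic n (2*k+1)) from by ring, ss_sq]
  unfold ic
  have hnat : (2*n-2*k)^2 * (Nat.choose (2*n-1) (2*k-1) * Nat.choose (2*n-1) (2*k+1))
      = (2*k * (2*n-1-(2*k-1))) * (Nat.choose (2*n-1) (2*k) * Nat.choose (2*n-1) (2*k+1)) := by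
    have h := keyNat n (2*k-1)
    rw [show 2*k-1+1 = 2*k from by omega] at h
    rw [show 2*n-1-(2*k-1) = 2*n-2*k from by omega] at h ⊢
    calc (2*n-2*k)^2 * (Nat.choose (2*n-1) (2*k-1) * Nat.choose (2*n-1) (2*k+1))
        = (Nat.choose (2*n-1) (2*k-1) * (2*n-2*k)) * ((2*n-2*k) * Nat.choose (2*n-1) (2*k+1)) := by ring
      _ = (Nat.choose (2*n-1) (2*k) * (2*k)) * ((2*n-2*k) * Nat.choose (2*n-1) (2*k+1)) := by rw [← h]
      _ = ((2*k) * (2*n-2*k)) * (Nat.choose (2*n-1) (2*k) * Nat.choose (2*n-1) (2*k+1)) := by ring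
  field_simp
  norm_cast
  rw [show 2*k-1+1 = 2*k from by omega]
  linarith [hnat]

lemma eps_pos {n k : ℕ} (hk : k < n) :
    0 < ss n (2*k) - ss n (2*k+1)/2 - (if k = 0 then 0 else ss n (2*k-1)/2) := by
  set a : ℝ := if k = 0 then 0 else ss n (2*k-1) with ha_def
  set b : ℝ := ss n (2*k) with hb_def
  set d : ℝ := ss n (2*k+1) with hd_def
  have ha : 0 ≤ a := by
    rw [ha_def]; split
    · exact le_rfl
    · exact ss_nonneg _ _
  have hb : 0 ≤ b := ss_nonneg _ _
  have hd : 0 ≤ d := ss_nonneg _ _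
  have hbr : b^2 = (2*(k:ℝ)+1)*(2*(n:ℝ)-1-2*(k:ℝ)) := by
    rw [hb_def, ss_sq]
    push_cast [Nat.cast_sub (show 2*k ≤ 2*n-1 by omega), Nat.cast_sub (show 1 ≤ 2*n by omega)]
    ring
  have hdr : d^2 = (2*(k:ℝ)+2)*(2*(n:ℝ)-2-2*(k:ℝ)) := by
    rw [hd_def, ss_sq]
    push_cast [Nat.cast_sub (show 2*k+1 ≤ 2*n-1 by omega), Nat.cast_sub (show 1 ≤ 2*n by omega)]
    ring
  have har : a^2 = (2*(k:ℝ))*(2*(n:ℝ)-2*(k:ℝ)) := by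
    rw [ha_def]; split
    · rename_i h; subst h; norm_num
    · rename_i h
      rw [ss_sq, show (2*k-1+1) = 2*k from by omega,
        show 2*n-1-(2*k-1) = 2*n-2*k from by omega]
      push_cast [Nat.cast_sub (show 2*k ≤ 2*n by omega)]
      ring
  have hb1 : (1:ℝ) ≤ b^2 := by
    rw [hbr]
    have h1 : (1:ℝ) ≤ 2*(k:ℝ)+1 := by have : (0:ℝ) ≤ (k:ℝ) := Nat.cast_nonneg _; linarith
    have h2 : (1:ℝ) ≤ 2*(n:ℝ)-1-2*(k:ℝ) := by
      have : (k:ℝ) + 1 ≤ (n:ℝ) := by exact_mod_cast hk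
      linarith
    nlinarith
  have hide : (if k = 0 then (0:ℝ) else ss n (2*k-1)/2) = a/2 := by
    rw [ha_def]; split <;> norm_num
  rw [hide]
  have hkey : 2*b^2 = a^2 + d^2 + 2 := by rw [hbr, hdr, har]; ring
  nlinarith [sq_nonneg (a-d), sq_nonneg (a+d), mul_nonneg (add_nonneg ha hd) hb,
    add_nonneg (add_nonneg ha hd) (by linarith : (0:ℝ) ≤ 2*b)]

lemma term_re (n k : ℕ) (hk : k < n) (p : ℕ → ℂ) :
    ((lamStar n k : ℂ) * (p (2*k) * (starRingEnd ℂ) (gZero n p (2*k+1))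
        + gZero n p (2*k) * (starRingEnd ℂ) (p (2*k+1)))).re
    = lamStar n k * (((2*n-1-2*k : ℕ):ℝ) * Complex.normSq (p (2*k))
        + ((2*k+1:ℕ):ℝ) * Complex.normSq (p (2*k+1)))
      + lamStar n k * ((2*k+2:ℕ):ℝ) * (p (2*k) * (starRingEnd ℂ) (p (2*k+2))).re
      + (if k = 0 then 0
         else lamStar n k * ((2*n-2*k : ℕ):ℝ) * (p (2*k-1) * (starRingEnd ℂ) (p (2*k+1))).re) := by
  have e1 : 2*k+1+1 = 2*k+2 := by omega
  have e2 : 2*k+1-1 = 2*k := by omega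
  have c1 : ((2*n-1-2*k : ℕ):ℝ) = 2*(n:ℝ)-1-2*(k:ℝ) := by
    rw [Nat.cast_sub (by omega), Nat.cast_sub (by omega)]
    push_cast; ring
  have c2 : ((2*n-2*k : ℕ):ℝ) = 2*(n:ℝ)-2*(k:ℝ) := by
    rw [Nat.cast_sub (by omega)]; push_cast; ring
  unfold gZero
  rw [e1, e2, if_neg (by omega : ¬ (2*k+1 = 0)), c1]
  by_cases hk0 : k = 0
  · subst hk0
    rw [if_pos rfl, if_pos (by norm_num)]
    simp only [Complex.normSq_apply, Complex.mul_re, Complex.add_re, Complex.sub_re,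
      Complex.mul_im, Complex.add_im, Complex.sub_im, Complex.conj_re, Complex.conj_im,
      Complex.ofReal_re, Complex.ofReal_im, Complex.natCast_re, Complex.natCast_im,
      Complex.one_re, Complex.one_im, Complex.re_ofNat, Complex.im_ofNat,
      Complex.zero_re, Complex.zero_im, mul_zero, zero_mul, add_zero, zero_add, sub_zero,
      neg_zero, zero_sub, map_zero]
    push_cast
    ring
  · rw [if_neg hk0, if_neg (by omega : ¬ (2*k = 0)), c2]
    simp only [Complex.normSq_apply, Complex.mul_re, Complex.add_re, Complex.sub_re,
      Complex.mul_im, Complex.add_im, Complex.sub_im, Complex.conj_re, Complex.conj_im,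
      Complex.ofReal_re, Complex.ofReal_im, Complex.natCast_re, Complex.natCast_im,
      Complex.one_re, Complex.one_im, Complex.re_ofNat, Complex.im_ofNat]
    push_cast
    ring


lemma term_bound (n k : ℕ) (hk : k < n) (p : ℕ → ℂ) (hvan : ∀ m, 2*n ≤ m → p m = 0) :
    ss n (2*k) * (Complex.normSq (p (2*k)) * ic n (2*k)
        + Complex.normSq (p (2*k+1)) * ic n (2*k+1))
    - ss n (2*k+1)/2 * (Complex.normSq (p (2*k)) * ic n (2*k)
        + Complex.normSq (p (2*k+2)) * ic n (2*k+2))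
    - (if k = 0 then 0 else ss n (2*k-1)/2 * (Complex.normSq (p (2*k-1)) * ic n (2*k-1)
        + Complex.normSq (p (2*k+1)) * ic n (2*k+1)))
    ≤ ((lamStar n k : ℂ) * (p (2*k) * (starRingEnd ℂ) (gZero n p (2*k+1))
        + gZero n p (2*k) * (starRingEnd ℂ) (p (2*k+1)))).re := by
  rw [term_re n k hk p]
  have hdiag : lamStar n k * (((2*n-1-2*k : ℕ):ℝ) * Complex.normSq (p (2*k))
        + ((2*k+1:ℕ):ℝ) * Complex.normSq (p (2*k+1)))
      = ss n (2*k) * (Complex.normSq (p (2*k)) * ic n (2*k)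
        + Complex.normSq (p (2*k+1)) * ic n (2*k+1)) := by
    have d1 := diag1 hk
    have d2 := diag2 hk
    linear_combination (Complex.normSq (p (2*k))) * d1 + (Complex.normSq (p (2*k+1))) * d2
  have hE : - (ss n (2*k+1)/2 * (Complex.normSq (p (2*k)) * ic n (2*k)
        + Complex.normSq (p (2*k+2)) * ic n (2*k+2)))
      ≤ lamStar n k * ((2*k+2:ℕ):ℝ) * (p (2*k) * (starRingEnd ℂ) (p (2*k+2))).re := by
    by_cases hke : k+1 < n
    · have hb := cross_bound2 (p (2*k)) (p (2*k+2)) (lamStar n k * ((2*k+2:ℕ):ℝ))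
        (ss n (2*k+1) * ic n (2*k)) (ss n (2*k+1) * ic n (2*k+2))
        (mul_nonneg (ss_nonneg _ _) (ic_nonneg _ _))
        (mul_nonneg (ss_nonneg _ _) (ic_nonneg _ _))
        (mul_nonneg (lamStar_nonneg _ _) (Nat.cast_nonneg _))
        (crossE hke)
      nlinarith [hb]
    · have hp2 : p (2*k+2) = 0 := hvan _ (by omega)
      rw [hp2]
      simp only [map_zero, mul_zero, Complex.zero_re, Complex.normSq_zero, zero_mul, add_zero]
      have h1 : 0 ≤ ss n (2*k+1)/2 * (Complex.normSq (p (2*k)) * ic n (2*k)) := by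
        have := ss_nonneg n (2*k+1)
        have := ic_nonneg n (2*k)
        have := Complex.normSq_nonneg (p (2*k))
        positivity
      linarith
  have hO : - (if k = 0 then 0 else ss n (2*k-1)/2 * (Complex.normSq (p (2*k-1)) * ic n (2*k-1)
        + Complex.normSq (p (2*k+1)) * ic n (2*k+1)))
      ≤ (if k = 0 then 0
         else lamStar n k * ((2*n-2*k : ℕ):ℝ) * (p (2*k-1) * (starRingEnd ℂ) (p (2*k+1))).re) := by
    by_cases hk0 : k = 0
    · simp [hk0]
    · rw [if_neg hk0, if_neg hk0]
      have hb := cross_bound2 (p (2*k-1)) (p (2*k+1)) (lamStar n k * ((2*n-2*k:ℕ):ℝ))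
        (ss n (2*k-1) * ic n (2*k-1)) (ss n (2*k-1) * ic n (2*k+1))
        (mul_nonneg (ss_nonneg _ _) (ic_nonneg _ _))
        (mul_nonneg (ss_nonneg _ _) (ic_nonneg _ _))
        (mul_nonneg (lamStar_nonneg _ _) (Nat.cast_nonneg _))
        (crossO hk (by omega))
      nlinarith [hb]
  linarith [hdiag, hE, hO]

/-- The explicit weight vector `λ*` is transverse to `𝐠₀`: for every nonzero coefficient
vector `p ∈ ℂ^{2n}`, `Re(q_{λ*}(p, 𝐠₀ p)) > 0`. -/
theorem lamStar_transverse (n : ℕ) (hn : 1 ≤ n) (p : ℕ → ℂ)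
    (hvan : ∀ k, 2*n ≤ k → p k = 0) (hp : p ≠ 0) :
    0 < (qForm n (lamStar n) p (gZero n p)).re := by
  classical
  have hq : (qForm n (lamStar n) p (gZero n p)).re
      = (1/2) * ∑ k ∈ Finset.range n, ((lamStar n k : ℂ) *
          (p (2*k) * (starRingEnd ℂ) (gZero n p (2*k+1))
            + gZero n p (2*k) * (starRingEnd ℂ) (p (2*k+1)))).re := by
    unfold qForm
    rw [show (1/2 : ℂ) = ((1/2 : ℝ) : ℂ) by norm_num, Complex.re_ofReal_mul, Complex.re_sum]
  rw [hq]
  set B : ℕ → ℝ := fun k =>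
    ss n (2*k) * (Complex.normSq (p (2*k)) * ic n (2*k)
        + Complex.normSq (p (2*k+1)) * ic n (2*k+1))
    - ss n (2*k+1)/2 * (Complex.normSq (p (2*k)) * ic n (2*k)
        + Complex.normSq (p (2*k+2)) * ic n (2*k+2))
    - (if k = 0 then 0 else ss n (2*k-1)/2 * (Complex.normSq (p (2*k-1)) * ic n (2*k-1)
        + Complex.normSq (p (2*k+1)) * ic n (2*k+1))) with hBdef
  have hsum1 : ∑ k ∈ Finset.range n, B k ≤ ∑ k ∈ Finset.range n,
      ((lamStar n k : ℂ) * (p (2*k) * (starRingEnd ℂ) (gZero n p (2*k+1))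
        + gZero n p (2*k) * (starRingEnd ℂ) (p (2*k+1)))).re := by
    apply Finset.sum_le_sum
    intro k hk
    exact term_bound n k (Finset.mem_range.1 hk) p hvan
  set eps : ℕ → ℝ := fun k =>
    ss n (2*k) - ss n (2*k+1)/2 - (if k = 0 then 0 else ss n (2*k-1)/2) with hepsdef
  set G : ℕ → ℝ := fun k => Complex.normSq (p (2*k)) * ic n (2*k)
    + Complex.normSq (p (2*k+1)) * ic n (2*k+1) with hGdef
  set phi : ℕ → ℝ := fun k =>
    if k = 0 then 0 else ss n (2*k-1)/2 * (Complex.normSq (p (2*k-1)) * ic n (2*k-1)) with hphidef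
  set chi : ℕ → ℝ := fun k =>
    if k = 0 then 0 else ss n (2*k-1)/2 * (Complex.normSq (p (2*k)) * ic n (2*k)) with hchidef
  have htel : ∑ k ∈ Finset.range n, B k = ∑ k ∈ Finset.range n, eps k * G k := by
    have hstep : ∀ k, B k - eps k * G k = (phi (k+1) - phi k) - (chi (k+1) - chi k) := by
      intro k
      have e1 : 2*(k+1)-1 = 2*k+1 := by omega
      have e2 : 2*(k+1) = 2*k+2 := by omega
      simp only [hBdef, hepsdef, hGdef, hphidef, hchidef]
      rw [if_neg (show ¬ (k+1 = 0) by omega), if_neg (show ¬ (k+1 = 0) by omega), e1, e2]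
      by_cases hk0 : k = 0
      · simp only [if_pos hk0]
        ring
      · simp only [if_neg hk0]
        ring
    have h1 : ∑ k ∈ Finset.range n, (B k - eps k * G k)
        = ∑ k ∈ Finset.range n, ((phi (k+1) - phi k) - (chi (k+1) - chi k)) :=
      Finset.sum_congr rfl (fun k _ => hstep k)
    rw [Finset.sum_sub_distrib (f := fun k => phi (k+1) - phi k), Finset.sum_range_sub phi,
      Finset.sum_range_sub chi] at h1
    have hphin : phi n = 0 := by
      simp only [hphidef]
      rw [if_neg (by omega : ¬ n = 0), ss_top n]
      ring
    have hchin : chi n = 0 := by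
      simp only [hchidef]
      rw [if_neg (by omega : ¬ n = 0), ss_top n]
      ring
    have hphi0 : phi 0 = 0 := by simp only [hphidef]; norm_num
    have hchi0 : chi 0 = 0 := by simp only [hchidef]; norm_num
    rw [hphin, hchin, hphi0, hchi0] at h1
    simp only [sub_zero, sub_self] at h1
    rw [Finset.sum_sub_distrib] at h1
    linarith [h1]
  have hpos : 0 < ∑ k ∈ Finset.range n, eps k * G k := by
    obtain ⟨m, hm⟩ := Function.ne_iff.1 hp
    have hm0 : p m ≠ 0 := hm
    have hmlt : m < 2*n := by
      by_contra hcon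
      exact hm0 (hvan m (by omega))
    apply Finset.sum_pos'
    · intro k hk
      have hkn : k < n := Finset.mem_range.1 hk
      apply mul_nonneg (le_of_lt (eps_pos hkn))
      rw [hGdef]
      have := ic_nonneg n (2*k)
      have := ic_nonneg n (2*k+1)
      have := Complex.normSq_nonneg (p (2*k))
      have := Complex.normSq_nonneg (p (2*k+1))
      positivity
    · refine ⟨m / 2, Finset.mem_range.2 (by omega), ?_⟩
      have hkn : m / 2 < n := by omega
      apply mul_pos (eps_pos hkn)
      rw [hGdef]
      have hFm : 0 < Complex.normSq (p m) := Complex.normSq_pos.2 hm0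
      have h1 : 0 ≤ Complex.normSq (p (2*(m/2))) * ic n (2*(m/2)) :=
        mul_nonneg (Complex.normSq_nonneg _) (ic_nonneg _ _)
      have h2 : 0 ≤ Complex.normSq (p (2*(m/2)+1)) * ic n (2*(m/2)+1) :=
        mul_nonneg (Complex.normSq_nonneg _) (ic_nonneg _ _)
      rcases Nat.even_or_odd m with ⟨j, hj⟩ | ⟨j, hj⟩
      · have hidx : 2*(m/2) = m := by omega
        have hpos1 : 0 < Complex.normSq (p (2*(m/2))) * ic n (2*(m/2)) := by
          rw [hidx]
          exact mul_pos hFm (ic_pos (by omega))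
        linarith
      · have hidx : 2*(m/2)+1 = m := by omega
        have hpos2 : 0 < Complex.normSq (p (2*(m/2)+1)) * ic n (2*(m/2)+1) := by
          rw [hidx]
          exact mul_pos hFm (ic_pos (by omega))
        linarith
  have := htel ▸ hsum1
  linarith
end

section
/- Let n ≥ 1 and let λ = (λ_0, …, λ_{n−1}) ∈ ℝ_{>0}^n satisfy the symmetry λ_k = λ_{n−1−k} for 0 ≤ k ≤ n−1. If Re(q_λ(p, 𝐠_0 p)) > 0 for every nonzero real coefficient vector p (i.e., every nonzero p ∈ ℂ^{2n} with p_k = conj(p_{2n−1−k}) for all 0 ≤ k ≤ 2n−1), then Re(q_λ(p, 𝐠_0 p)) > 0 for every nonzero p ∈ ℂ^{2n}. -/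
open Finset

noncomputable def sigmaV (n : ℕ) (p : ℕ → ℂ) : ℕ → ℂ :=
  fun m => if m < 2*n then (starRingEnd ℂ) (p (2*n - 1 - m)) else 0

noncomputable def aV (n : ℕ) (p : ℕ → ℂ) : ℕ → ℂ := fun m => (p m + sigmaV n p m) / 2
noncomputable def cV (n : ℕ) (p : ℕ → ℂ) : ℕ → ℂ := fun m => (p m - sigmaV n p m) / 2

lemma sigmaV_aV (n : ℕ) (p : ℕ → ℂ) (hsupp : ∀ k, 2*n ≤ k → p k = 0) :
    sigmaV n (aV n p) = aV n p := by
  funext m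
  by_cases hm : m < 2*n
  · have hm' : 2*n - 1 - m < 2*n := by omega
    have hmm : 2*n - 1 - (2*n - 1 - m) = m := by omega
    simp only [sigmaV, aV, if_pos hm, if_pos hm', hmm, map_div₀, map_add, Complex.conj_conj,
      map_ofNat]
    ring
  · have h0 : p m = 0 := hsupp m (by omega)
    simp only [sigmaV, aV, if_neg hm, h0]
    norm_num

lemma sigmaV_cV (n : ℕ) (p : ℕ → ℂ) (hsupp : ∀ k, 2*n ≤ k → p k = 0) :
    sigmaV n (cV n p) = fun m => -(cV n p m) := by
  funext m
  by_cases hm : m < 2*n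
  · have hm' : 2*n - 1 - m < 2*n := by omega
    have hmm : 2*n - 1 - (2*n - 1 - m) = m := by omega
    simp only [sigmaV, cV, if_pos hm, if_pos hm', hmm, map_div₀, map_sub, Complex.conj_conj,
      map_ofNat]
    ring
  · have h0 : p m = 0 := hsupp m (by omega)
    simp only [sigmaV, cV, if_neg hm, h0]
    norm_num

lemma gZero_sigma (n : ℕ) (hn : 1 ≤ n) (p : ℕ → ℂ) (hsupp : ∀ k, 2*n ≤ k → p k = 0) :
    gZero n (sigmaV n p) = sigmaV n (gZero n p) := by
  funext m
  simp only [gZero, sigmaV]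
  by_cases hm : m < 2*n
  · rw [if_pos hm]
    rcases Nat.eq_zero_or_pos m with hm0 | hm0
    · subst hm0
      have h1 : (0:ℕ) + 1 < 2*n := by omega
      rw [if_pos h1, if_pos rfl]
      have h2 : 2*n - 1 - 0 = 2*n - 1 := by omega
      have h3 : ¬ (2*n - 1 = 0) := by omega
      have h4 : 2*n - 1 + 1 = 2*n := by omega
      have h5 : 2*n - 1 - (0+1) = 2*n - 1 - 1 := by omega
      rw [h2, if_neg h3, h4, hsupp (2*n) le_rfl]
      have hc : ((2*n - 1 : ℕ) : ℂ) = 2*n - 1 := by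
        push_cast [Nat.cast_sub (by omega : 1 ≤ 2*n)]; ring
      simp only [map_add, map_mul, map_sub, map_one, Complex.conj_natCast, map_ofNat,
        map_zero, mul_zero, zero_add, hc, Nat.cast_zero, h5]
      ring
    · rcases Nat.lt_or_ge m (2*n - 1) with hm1 | hm1
      · have h1 : m + 1 < 2*n := by omega
        have h2 : m - 1 < 2*n := by omega
        have h3 : ¬ m = 0 := by omega
        have h4 : ¬ (2*n - 1 - m = 0) := by omega
        rw [if_pos h1, if_neg h3, if_pos h2, if_neg h4]
        have i1 : 2*n - 1 - (m+1) = 2*n - 1 - m - 1 := by omega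
        have i2 : 2*n - 1 - (m-1) = 2*n - 1 - m + 1 := by omega
        rw [i1, i2]
        have hc : ((2*n - 1 - m : ℕ) : ℂ) = 2*n - 1 - m := by
          push_cast [Nat.cast_sub (by omega : m ≤ 2*n - 1), Nat.cast_sub (by omega : 1 ≤ 2*n)]
          ring
        simp only [map_add, map_mul, map_sub, map_one, Complex.conj_natCast, map_ofNat, hc]
        ring
      · have hm2 : m = 2*n - 1 := by omega
        subst hm2
        have h1 : ¬ (2*n - 1 + 1 < 2*n) := by omega
        have h3 : ¬ (2*n - 1 = 0) := by omega
        have h2 : 2*n - 1 - 1 < 2*n := by omega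
        rw [if_neg h1, if_neg h3, if_pos h2]
        have i0 : 2*n - 1 - (2*n - 1) = 0 := by omega
        have i1 : 2*n - 1 - (2*n - 1 - 1) = 1 := by omega
        rw [i0, i1]
        have hc : ((2*n - 1 : ℕ) : ℂ) = 2*n - 1 := by
          push_cast [Nat.cast_sub (by omega : 1 ≤ 2*n)]; ring
        simp only [reduceIte, map_add, map_mul, map_one,
          Complex.conj_natCast, map_ofNat, Nat.cast_zero, map_zero, mul_zero, add_zero, hc]
        ring
  · rw [if_neg hm]
    have h1 : ¬ (m + 1 < 2*n) := by omega
    have h3 : ¬ m = 0 := by omega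
    rw [if_neg h1, if_neg h3, mul_zero, zero_add]
    by_cases hm2 : m - 1 < 2*n
    · have hmeq : m = 2*n := by omega
      subst hmeq
      rw [if_pos hm2]
      push_cast
      ring
    · rw [if_neg hm2, mul_zero]

lemma qForm_sigma (n : ℕ) (lam : ℕ → ℝ) (hsym : ∀ k < n, lam k = lam (n - 1 - k))
    (p q : ℕ → ℂ) :
    qForm n lam (sigmaV n p) (sigmaV n q) = qForm n lam p q := by
  unfold qForm
  congr 1
  rw [← Finset.sum_range_reflect
    (fun k => (lam k : ℂ) * (p (2*k) * (starRingEnd ℂ) (q (2*k+1)) +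
      q (2*k) * (starRingEnd ℂ) (p (2*k+1)))) n]
  refine Finset.sum_congr rfl fun k hk => ?_
  simp only [Finset.mem_range] at hk
  simp only [sigmaV]
  have h1 : 2*k < 2*n := by omega
  have h2 : 2*k + 1 < 2*n := by omega
  have i1 : 2*n - 1 - 2*k = 2*(n-1-k) + 1 := by omega
  have i2 : 2*n - 1 - (2*k+1) = 2*(n-1-k) := by omega
  rw [if_pos h1, if_pos h2, if_pos h1, if_pos h2, i1, i2, Complex.conj_conj,
    Complex.conj_conj, hsym k hk]
  ring

lemma gZero_add (n : ℕ) (x y : ℕ → ℂ) :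
    gZero n (fun m => x m + y m) = fun m => gZero n x m + gZero n y m := by
  funext m
  simp only [gZero]
  by_cases h : m = 0 <;> simp [h] <;> ring

lemma gZero_neg (n : ℕ) (x : ℕ → ℂ) :
    gZero n (fun m => -(x m)) = fun m => -(gZero n x m) := by
  funext m
  simp only [gZero]
  by_cases h : m = 0 <;> simp [h] <;> ring

lemma gZero_I (n : ℕ) (x : ℕ → ℂ) :
    gZero n (fun m => Complex.I * x m) = fun m => Complex.I * gZero n x m := by
  funext m
  simp only [gZero]
  by_cases h : m = 0 <;> simp [h] <;> ring

lemma qForm_add_left (n : ℕ) (lam : ℕ → ℝ) (x y z : ℕ → ℂ) :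
    qForm n lam (fun m => x m + y m) z = qForm n lam x z + qForm n lam y z := by
  simp only [qForm, ← mul_add, ← Finset.sum_add_distrib]
  congr 1
  refine Finset.sum_congr rfl fun k _ => ?_
  simp only [map_add]
  ring

lemma qForm_add_right (n : ℕ) (lam : ℕ → ℝ) (x y z : ℕ → ℂ) :
    qForm n lam z (fun m => x m + y m) = qForm n lam z x + qForm n lam z y := by
  simp only [qForm, ← mul_add, ← Finset.sum_add_distrib]
  congr 1
  refine Finset.sum_congr rfl fun k _ => ?_
  simp only [map_add]
  ring

lemma qForm_neg_left (n : ℕ) (lam : ℕ → ℝ) (x z : ℕ → ℂ) :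
    qForm n lam (fun m => -(x m)) z = -qForm n lam x z := by
  simp only [qForm, ← mul_neg, ← Finset.sum_neg_distrib]
  congr 1
  refine Finset.sum_congr rfl fun k _ => ?_
  simp only [map_neg]
  ring

lemma qForm_neg_right (n : ℕ) (lam : ℕ → ℝ) (x z : ℕ → ℂ) :
    qForm n lam z (fun m => -(x m)) = -qForm n lam z x := by
  simp only [qForm, ← mul_neg, ← Finset.sum_neg_distrib]
  congr 1
  refine Finset.sum_congr rfl fun k _ => ?_
  simp only [map_neg]
  ring

lemma qForm_I (n : ℕ) (lam : ℕ → ℝ) (x y : ℕ → ℂ) :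
    qForm n lam (fun m => Complex.I * x m) (fun m => Complex.I * y m) = qForm n lam x y := by
  unfold qForm
  congr 1
  refine Finset.sum_congr rfl fun k _ => ?_
  simp only [map_mul, Complex.conj_I]
  ring_nf
  simp [Complex.I_sq]

lemma aV_supp (n : ℕ) (p : ℕ → ℂ) (hsupp : ∀ k, 2*n ≤ k → p k = 0) :
    ∀ k, 2*n ≤ k → aV n p k = 0 := by
  intro k hk
  simp [aV, sigmaV, hsupp k hk, show ¬ k < 2*n by omega]

lemma cV_supp (n : ℕ) (p : ℕ → ℂ) (hsupp : ∀ k, 2*n ≤ k → p k = 0) :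
    ∀ k, 2*n ≤ k → cV n p k = 0 := by
  intro k hk
  simp [cV, sigmaV, hsupp k hk, show ¬ k < 2*n by omega]

lemma qsplit (n : ℕ) (hn : 1 ≤ n) (lam : ℕ → ℝ)
    (hsym : ∀ k < n, lam k = lam (n - 1 - k))
    (p : ℕ → ℂ) (hsupp : ∀ k, 2*n ≤ k → p k = 0) :
    qForm n lam p (gZero n p)
      = qForm n lam (aV n p) (gZero n (aV n p))
        + qForm n lam (cV n p) (gZero n (cV n p)) := by
  have hp : (fun m => aV n p m + cV n p m) = p := by
    funext m; simp only [aV, cV]; ring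
  conv_lhs => rw [← hp]
  rw [gZero_add, qForm_add_left, qForm_add_right, qForm_add_right]
  have h1 : qForm n lam (aV n p) (gZero n (cV n p)) = 0 := by
    have h := qForm_sigma n lam hsym (aV n p) (gZero n (cV n p))
    rw [← gZero_sigma n hn (cV n p) (cV_supp n p hsupp)] at h
    rw [sigmaV_aV n p hsupp, sigmaV_cV n p hsupp, gZero_neg, qForm_neg_right] at h
    linear_combination -h/2
  have h2 : qForm n lam (cV n p) (gZero n (aV n p)) = 0 := by
    have h := qForm_sigma n lam hsym (cV n p) (gZero n (aV n p))
    rw [← gZero_sigma n hn (aV n p) (aV_supp n p hsupp)] at h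
    rw [sigmaV_aV n p hsupp, sigmaV_cV n p hsupp, qForm_neg_left] at h
    linear_combination -h/2
  rw [h1, h2]
  ring

/-- If a symmetric positive weight `λ` satisfies `Re(q_λ(p, 𝐠₀ p)) > 0` for every nonzero
real coefficient vector (`p_k = conj(p_{2n−1−k})`), then the same holds for every nonzero
complex coefficient vector. -/
theorem transverse_of_transverse_on_real (n : ℕ) (hn : 1 ≤ n)
    (lam : ℕ → ℝ) (hpos : ∀ k < n, 0 < lam k)
    (hsym : ∀ k < n, lam k = lam (n - 1 - k))
    (hreal : ∀ p : ℕ → ℂ, (∀ k, 2*n ≤ k → p k = 0) →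
      (∀ k < 2*n, p k = (starRingEnd ℂ) (p (2*n - 1 - k))) → p ≠ 0 →
      0 < (qForm n lam p (gZero n p)).re) :
    ∀ p : ℕ → ℂ, (∀ k, 2*n ≤ k → p k = 0) → p ≠ 0 →
      0 < (qForm n lam p (gZero n p)).re := by
  intro p hsupp hne
  have hsa := aV_supp n p hsupp
  have hsc := cV_supp n p hsupp
  have key := qsplit n hn lam hsym p hsupp
  have reala : ∀ k < 2*n, aV n p k = (starRingEnd ℂ) (aV n p (2*n - 1 - k)) := by
    intro k hk
    have h := congrFun (sigmaV_aV n p hsupp) k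
    simp only [sigmaV, if_pos hk] at h
    exact h.symm
  have hccj : ∀ k < 2*n, (starRingEnd ℂ) (cV n p (2*n - 1 - k)) = -(cV n p k) := by
    intro k hk
    have h := congrFun (sigmaV_cV n p hsupp) k
    simp only [sigmaV, if_pos hk] at h
    exact h
  have reald : ∀ k < 2*n,
      (fun m => Complex.I * cV n p m) k
        = (starRingEnd ℂ) ((fun m => Complex.I * cV n p m) (2*n - 1 - k)) := by
    intro k hk
    simp only [map_mul, Complex.conj_I, hccj k hk]
    ring
  have hdsupp : ∀ k, 2*n ≤ k → (fun m => Complex.I * cV n p m) k = 0 := by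
    intro k hk
    simp only [hsc k hk, mul_zero]
  have hQc : qForm n lam (cV n p) (gZero n (cV n p))
      = qForm n lam (fun m => Complex.I * cV n p m)
          (gZero n (fun m => Complex.I * cV n p m)) := by
    rw [gZero_I, qForm_I]
  have hApos : aV n p ≠ 0 → 0 < (qForm n lam (aV n p) (gZero n (aV n p))).re :=
    fun h => hreal (aV n p) hsa reala h
  have hCpos : cV n p ≠ 0 → 0 < (qForm n lam (cV n p) (gZero n (cV n p))).re := by
    intro h
    rw [hQc]
    refine hreal _ hdsupp reald ?_
    intro h0
    apply h
    funext m
    have h1 := congrFun h0 m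
    simp only [Pi.zero_apply] at h1 ⊢
    rcases mul_eq_zero.mp h1 with h2 | h2
    · exact absurd h2 Complex.I_ne_zero
    · exact h2
  rw [key, Complex.add_re]
  by_cases hA : aV n p = 0
  · by_cases hC : cV n p = 0
    · exfalso
      apply hne
      funext m
      have ha := congrFun hA m
      have hc := congrFun hC m
      simp only [Pi.zero_apply, aV, cV] at ha hc ⊢
      linear_combination ha + hc
    · have hAz : qForm n lam (aV n p) (gZero n (aV n p)) = 0 := by
        rw [hA]; simp [qForm]
      rw [hAz]
      simpa using hCpos hC
  · by_cases hC : cV n p = 0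
    · have hCz : qForm n lam (cV n p) (gZero n (cV n p)) = 0 := by
        rw [hC]; simp [qForm]
      rw [hCz]
      simpa using hApos hA
    · have := hApos hA
      have := hCpos hC
      positivity
end

section
/- Let n ≥ 1 and let λ = (λ_0, …, λ_{n−1}) ∈ ℝ^n satisfy λ_k = λ_{n−1−k} for 0 ≤ k ≤ n−1. Then for every real coefficient vector p ∈ ℂ^{2n} (i.e., p_k = conj(p_{2n−1−k}) for all 0 ≤ k ≤ 2n−1, extended by zero outside {0,…,2n−1}), one has q_λ(p, 𝐠_0 p) = Σ_{k=0}^{n−1} λ_k ( (2n−2k−1) |p_{2k}|^2 + (2k+2) p_{2k} · conj(p_{2k+2}) ), where p_{2n} = 0. -/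
open Finset

/-- "Even" summand: the target summand, written with `p * conj p` instead of `normSq`. -/
noncomputable def Eterm (n : ℕ) (lam : ℕ → ℝ) (p : ℕ → ℂ) (k : ℕ) : ℂ :=
  (lam k : ℂ) * (((2*n : ℂ) - 2*(k:ℂ) - 1) * (p (2*k) * (starRingEnd ℂ) (p (2*k)))
    + (2*(k:ℂ) + 2) * (p (2*k) * (starRingEnd ℂ) (p (2*k+2))))

/-- "Odd" summand. -/
noncomputable def Oterm (n : ℕ) (lam : ℕ → ℝ) (p : ℕ → ℂ) (k : ℕ) : ℂ :=
  (lam k : ℂ) * ((2*(k:ℂ) + 1) * (p (2*k+1) * (starRingEnd ℂ) (p (2*k+1)))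
    + ((2*n : ℂ) - 2*(k:ℂ)) * ((if k = 0 then 0 else p (2*k-1)) * (starRingEnd ℂ) (p (2*k+1))))

lemma step1 (n : ℕ) (lam : ℕ → ℝ) (p : ℕ → ℂ) :
    qForm n lam p (gZero n p)
      = (1/2) * ((∑ k ∈ Finset.range n, Eterm n lam p k)
          + (∑ k ∈ Finset.range n, Oterm n lam p k)) := by
  unfold qForm gZero Eterm Oterm
  rw [← Finset.sum_add_distrib]
  congr 1
  apply Finset.sum_congr rfl
  intro k _
  have h1 : 2*k+1+1 = 2*k+2 := rfl
  have h2 : 2*k+1-1 = 2*k := rfl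
  have h3 : (2*k+1 ≠ 0) := by omega
  rw [h1, h2, if_neg h3]
  by_cases hk0 : k = 0
  · subst hk0
    norm_num
    simp only [map_add, map_mul, map_sub, map_one, Complex.conj_natCast, Complex.conj_ofNat,
      map_ofNat]
    ring
  · rw [if_neg (show 2*k ≠ 0 by omega), if_neg hk0]
    simp only [map_add, map_mul, map_sub, map_one, Complex.conj_natCast, Complex.conj_ofNat,
      map_ofNat]
    push_cast
    ring

lemma step2 (n : ℕ) (hn : 1 ≤ n)
    (lam : ℕ → ℝ) (hsym : ∀ k < n, lam k = lam (n - 1 - k))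
    (p : ℕ → ℂ) (hvan : ∀ k, 2*n ≤ k → p k = 0)
    (hreal : ∀ k < 2*n, p k = (starRingEnd ℂ) (p (2*n - 1 - k))) :
    (∑ k ∈ Finset.range n, Oterm n lam p k) = ∑ k ∈ Finset.range n, Eterm n lam p k := by
  rw [← Finset.sum_range_reflect (Oterm n lam p) n]
  apply Finset.sum_congr rfl
  intro k hk
  rw [Finset.mem_range] at hk
  obtain ⟨j, hj⟩ : ∃ j, j + k + 1 = n := ⟨n - 1 - k, by omega⟩
  have hjeq : n - 1 - k = j := by omega
  rw [hjeq]
  have hcast : (n : ℂ) = (j : ℂ) + (k : ℂ) + 1 := by exact_mod_cast congrArg (Nat.cast (R := ℂ)) hj.symm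
  have hlam : lam j = lam k := by
    have h := hsym k hk
    rw [hjeq] at h
    exact h.symm
  have hp1 : p (2*j+1) = (starRingEnd ℂ) (p (2*k)) := by
    have h := hreal (2*j+1) (by omega)
    have e : 2*n - 1 - (2*j+1) = 2*k := by omega
    rw [h, e]
  unfold Oterm Eterm
  rw [hp1, hlam]
  by_cases hj0 : j = 0
  · have hpz : p (2*k+2) = 0 := hvan _ (by omega)
    rw [if_pos hj0, hpz, hj0]
    simp only [map_zero, mul_zero, zero_mul, add_zero, Nat.cast_zero, Complex.conj_conj]
    rw [hcast, hj0]
    push_cast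
    ring
  · have hp2 : p (2*j-1) = (starRingEnd ℂ) (p (2*k+2)) := by
      have h := hreal (2*j-1) (by omega)
      have e : 2*n - 1 - (2*j-1) = 2*k+2 := by omega
      rw [h, e]
    rw [if_neg hj0, hp2]
    simp only [Complex.conj_conj]
    rw [hcast]
    ring

/-- For a symmetric weight `λ` and a real coefficient vector `p`,
`q_λ(p, 𝐠₀ p) = Σ_{k<n} λ_k ((2n−2k−1)|p_{2k}|² + (2k+2) p_{2k} conj(p_{2k+2}))`. -/
theorem qForm_gZero_real_formula (n : ℕ) (hn : 1 ≤ n)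
    (lam : ℕ → ℝ) (hsym : ∀ k < n, lam k = lam (n - 1 - k))
    (p : ℕ → ℂ) (hvan : ∀ k, 2*n ≤ k → p k = 0)
    (hreal : ∀ k < 2*n, p k = (starRingEnd ℂ) (p (2*n - 1 - k))) :
    qForm n lam p (gZero n p)
      = ∑ k ∈ Finset.range n, (lam k : ℂ) *
          (((2*n : ℂ) - 2*(k : ℂ) - 1) * (Complex.normSq (p (2*k)) : ℂ)
            + (2*(k : ℂ) + 2) * (p (2*k) * (starRingEnd ℂ) (p (2*k+2)))) := by
  rw [step1, step2 n hn lam hsym p hvan hreal, ← two_mul, ← mul_assoc]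
  norm_num
  apply Finset.sum_congr rfl
  intro k _
  unfold Eterm
  rw [Complex.mul_conj]
end

section
/- Let n ≥ 1 and let λ = (λ_0, …, λ_{n−1}) ∈ ℝ_{>0}^n be transverse to 𝐠_0, i.e., Re(q_λ(p, 𝐠_0 p)) > 0 for every nonzero p ∈ ℂ^{2n}. For a nonzero homogeneous polynomial P = Σ_{k=0}^{2n−1} p_k Z^k W^{2n−1−k} and t ∈ ℝ, let p(t) ∈ ℂ^{2n} denote the coefficient vector of the polynomial g_t · P obtained from P by the substitution Z ↦ cosh(t) Z + sinh(t) W, W ↦ sinh(t) Z + cosh(t) W. Then the function t ↦ Re( q_λ(p(t), p(t)) ) = Re( Σ_{k=0}^{n−1} λ_k p(t)_{2k} · conj(p(t)_{2k+1}) ) is strictly increasing on ℝ. -/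
open Finset

/-- The homogeneous polynomial `Σ_{k<2n} p_k Z^k W^{2n−1−k}` in `ℂ[Z,W]`
(`Z` is variable 0 and `W` is variable 1). -/
noncomputable def polyOf (n : ℕ) (p : ℕ → ℂ) : MvPolynomial (Fin 2) ℂ :=
  ∑ k ∈ Finset.range (2*n),
    MvPolynomial.C (p k) * MvPolynomial.X 0 ^ k * MvPolynomial.X 1 ^ (2*n - 1 - k)

/-- The coefficient vector of a polynomial in `ℂ[Z,W]`, read off in the basis
`Z^k W^{2n−1−k}`. -/
noncomputable def coeffVec (n : ℕ) (Q : MvPolynomial (Fin 2) ℂ) : ℕ → ℂ :=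
  fun k => MvPolynomial.coeff (Finsupp.single 0 k + Finsupp.single 1 (2*n - 1 - k)) Q

/-- The coefficient vector of `g_t · P`, where `g_t` acts by the substitution
`Z ↦ cosh(t) Z + sinh(t) W`, `W ↦ sinh(t) Z + cosh(t) W`. -/
noncomputable def gtAction (n : ℕ) (t : ℝ) (p : ℕ → ℂ) : ℕ → ℂ :=
  coeffVec n (MvPolynomial.aeval
    ![MvPolynomial.C ((Real.cosh t : ℂ)) * MvPolynomial.X 0
        + MvPolynomial.C ((Real.sinh t : ℂ)) * MvPolynomial.X 1,
      MvPolynomial.C ((Real.sinh t : ℂ)) * MvPolynomial.X 0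
        + MvPolynomial.C ((Real.cosh t : ℂ)) * MvPolynomial.X 1]
    (polyOf n p))


open MvPolynomial in
/-- The substitution family. -/
noncomputable def phiF (t : ℝ) : Fin 2 → MvPolynomial (Fin 2) ℂ :=
  ![MvPolynomial.C ((Real.cosh t : ℂ)) * MvPolynomial.X 0
      + MvPolynomial.C ((Real.sinh t : ℂ)) * MvPolynomial.X 1,
    MvPolynomial.C ((Real.sinh t : ℂ)) * MvPolynomial.X 0
      + MvPolynomial.C ((Real.cosh t : ℂ)) * MvPolynomial.X 1]

/-- Scalar coefficient functions. -/
noncomputable def cfE (n k m : ℕ) (t : ℝ) : ℂ :=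
  ∑ i ∈ Finset.range (k+1), ∑ l ∈ Finset.range (2*n - k),
    if i + l = m then
      ((k.choose i * (2*n-1-k).choose l : ℕ) : ℂ)
        * ((Real.cosh t : ℂ))^(i + (2*n-1-k-l)) * ((Real.sinh t : ℂ))^((k-i) + l)
    else 0

open MvPolynomial

lemma pair_eq_iff (a b a' b' : ℕ) :
    (Finsupp.single (0 : Fin 2) a + Finsupp.single 1 b = Finsupp.single 0 a' + Finsupp.single 1 b') ↔ (a = a' ∧ b = b') := by
  constructor
  · intro h
    have h0 := DFunLike.congr_fun h 0
    have h1 := DFunLike.congr_fun h 1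
    simp [Finsupp.single_apply] at h0 h1
    exact ⟨h0, h1⟩
  · rintro ⟨rfl, rfl⟩; rfl

lemma binExp (a b : ℂ) (k : ℕ) :
    (MvPolynomial.C a * MvPolynomial.X 0 + MvPolynomial.C b * MvPolynomial.X 1 : MvPolynomial (Fin 2) ℂ)^k
      = ∑ i ∈ range (k+1), MvPolynomial.monomial (Finsupp.single 0 i + Finsupp.single 1 (k-i))
          (a^i * b^(k-i) * (k.choose i : ℂ)) := by
  have h0 : (MvPolynomial.C a * MvPolynomial.X 0 : MvPolynomial (Fin 2) ℂ)
      = MvPolynomial.monomial (Finsupp.single 0 1) a := by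
    rw [X, C_mul_monomial, mul_one]
  have h1 : (MvPolynomial.C b * MvPolynomial.X 1 : MvPolynomial (Fin 2) ℂ)
      = MvPolynomial.monomial (Finsupp.single 1 1) b := by
    rw [X, C_mul_monomial, mul_one]
  rw [h0, h1, add_pow]
  refine Finset.sum_congr rfl fun i hi => ?_
  rw [monomial_pow, monomial_pow, monomial_mul]
  have : ((k.choose i : ℕ) : MvPolynomial (Fin 2) ℂ) = MvPolynomial.C ((k.choose i : ℕ) : ℂ) := by
    simp
  rw [this, mul_comm, C_mul_monomial]
  congr 1
  · simp [Finsupp.smul_single]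
  · ring

lemma aeval_polyOf_expand (n : ℕ) (t : ℝ) (p : ℕ → ℂ) :
    MvPolynomial.aeval (phiF t) (polyOf n p)
      = ∑ k ∈ range (2*n), ∑ i ∈ range (k+1), ∑ l ∈ range (2*n - k),
          MvPolynomial.monomial (Finsupp.single 0 (i+l) + Finsupp.single 1 ((k-i) + (2*n-1-k-l)))
            (p k * (((k.choose i * (2*n-1-k).choose l : ℕ) : ℂ)
              * ((Real.cosh t : ℂ))^(i + (2*n-1-k-l)) * ((Real.sinh t : ℂ))^((k-i) + l))) := by
  rw [polyOf, map_sum]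
  refine Finset.sum_congr rfl fun k hk => ?_
  have hk2 : k < 2*n := mem_range.mp hk
  rw [map_mul, map_mul, map_pow, map_pow, aeval_C, aeval_X, aeval_X]
  have e0 : phiF t 0 = MvPolynomial.C ((Real.cosh t : ℂ)) * MvPolynomial.X 0
      + MvPolynomial.C ((Real.sinh t : ℂ)) * MvPolynomial.X 1 := rfl
  have e1 : phiF t 1 = MvPolynomial.C ((Real.sinh t : ℂ)) * MvPolynomial.X 0
      + MvPolynomial.C ((Real.cosh t : ℂ)) * MvPolynomial.X 1 := rfl
  rw [e0, e1, binExp, binExp, algebraMap_eq, mul_assoc, Finset.sum_mul_sum]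
  simp only [Finset.mul_sum]
  have hrange : range (2*n - 1 - k + 1) = range (2*n - k) := by congr 1; omega
  rw [hrange]
  refine Finset.sum_congr rfl fun i hi => Finset.sum_congr rfl fun l hl => ?_
  rw [monomial_mul, C_mul_monomial]
  have haddr : (Finsupp.single (0:Fin 2) i + Finsupp.single 1 (k-i))
      + (Finsupp.single 0 l + Finsupp.single 1 (2*n-1-k-l))
      = Finsupp.single (0:Fin 2) (i+l) + Finsupp.single 1 ((k-i) + (2*n-1-k-l)) := by
    rw [Finsupp.single_add, Finsupp.single_add]
    abel
  rw [haddr]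
  congr 1
  push_cast [pow_add]
  ring

lemma gtAction_eq (n : ℕ) (t : ℝ) (p : ℕ → ℂ) (m : ℕ) :
    gtAction n t p m = ∑ k ∈ range (2*n), p k * cfE n k m t := by
  have hg : gtAction n t p m = MvPolynomial.coeff
      (Finsupp.single 0 m + Finsupp.single 1 (2*n - 1 - m))
      (MvPolynomial.aeval (phiF t) (polyOf n p)) := rfl
  rw [hg, aeval_polyOf_expand]
  simp only [coeff_sum, coeff_monomial]
  refine Finset.sum_congr rfl fun k hk => ?_
  have hk2 : k < 2*n := mem_range.mp hk
  rw [cfE, Finset.mul_sum]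
  refine Finset.sum_congr rfl fun i hi => ?_
  rw [Finset.mul_sum]
  refine Finset.sum_congr rfl fun l hl => ?_
  have hi2 : i < k + 1 := mem_range.mp hi
  have hl2 : l < 2*n - k := mem_range.mp hl
  have hcond : (Finsupp.single (0:Fin 2) (i+l) + Finsupp.single 1 ((k-i) + (2*n-1-k-l))
      = Finsupp.single 0 m + Finsupp.single 1 (2*n-1-m)) ↔ (i + l = m) := by
    rw [pair_eq_iff]
    constructor
    · exact fun h => h.1
    · intro h
      constructor
      · exact h
      · omega
  rw [if_congr hcond rfl rfl, mul_ite, mul_zero]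


lemma aeval_polyOf (n : ℕ) (t : ℝ) (p : ℕ → ℂ) :
    MvPolynomial.aeval (phiF t) (polyOf n p) = polyOf n (gtAction n t p) := by
  have hR : polyOf n (gtAction n t p)
      = ∑ m ∈ range (2*n), ∑ k ∈ range (2*n), ∑ i ∈ range (k+1), ∑ l ∈ range (2*n - k),
          (if i + l = m then MvPolynomial.monomial
              (Finsupp.single 0 m + Finsupp.single 1 (2*n-1-m))
            (p k * (((k.choose i * (2*n-1-k).choose l : ℕ) : ℂ)
              * ((Real.cosh t : ℂ))^(i + (2*n-1-k-l)) * ((Real.sinh t : ℂ))^((k-i) + l))) else 0) := by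
    rw [polyOf]
    refine Finset.sum_congr rfl fun m hm => ?_
    rw [mul_assoc, X_pow_eq_monomial, X_pow_eq_monomial, monomial_mul, one_mul, C_mul_monomial]
    rw [gtAction_eq]
    simp only [cfE, mul_one, Finset.mul_sum, mul_ite, mul_zero, map_sum,
      apply_ite (MvPolynomial.monomial (Finsupp.single (0:Fin 2) m + Finsupp.single 1 (2*n-1-m))),
      map_zero]
  rw [aeval_polyOf_expand, hR]
  conv_rhs => rw [Finset.sum_comm]
  refine Finset.sum_congr rfl fun k hk => ?_
  conv_rhs => rw [Finset.sum_comm]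
  refine Finset.sum_congr rfl fun i hi => ?_
  conv_rhs => rw [Finset.sum_comm]
  refine Finset.sum_congr rfl fun l hl => ?_
  have hk2 := mem_range.mp hk
  have hi2 := mem_range.mp hi
  have hl2 := mem_range.mp hl
  have hcong : ∀ m ∈ range (2*n), (if i + l = m then MvPolynomial.monomial
        (Finsupp.single (0:Fin 2) m + Finsupp.single 1 (2*n-1-m))
        (p k * (((k.choose i * (2*n-1-k).choose l : ℕ) : ℂ)
          * ((Real.cosh t : ℂ))^(i + (2*n-1-k-l)) * ((Real.sinh t : ℂ))^((k-i) + l))) else 0)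
      = (if m = i + l then MvPolynomial.monomial
        (Finsupp.single (0:Fin 2) m + Finsupp.single 1 (2*n-1-m))
        (p k * (((k.choose i * (2*n-1-k).choose l : ℕ) : ℂ)
          * ((Real.cosh t : ℂ))^(i + (2*n-1-k-l)) * ((Real.sinh t : ℂ))^((k-i) + l))) else 0) :=
    fun m _ => if_congr eq_comm rfl rfl
  rw [Finset.sum_congr rfl hcong, Finset.sum_ite_eq' (range (2*n)) (i+l)
    (fun m => MvPolynomial.monomial
        (Finsupp.single (0:Fin 2) m + Finsupp.single 1 (2*n-1-m))
        (p k * (((k.choose i * (2*n-1-k).choose l : ℕ) : ℂ)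
          * ((Real.cosh t : ℂ))^(i + (2*n-1-k-l)) * ((Real.sinh t : ℂ))^((k-i) + l))))]
  rw [if_pos (mem_range.mpr (by omega))]
  have he : (k-i) + (2*n-1-k-l) = 2*n-1-(i+l) := by omega
  rw [he]

lemma phiF_comp (s t : ℝ) :
    (fun i => MvPolynomial.aeval (phiF s) (phiF t i)) = phiF (s + t) := by
  have key : ∀ ct st : ℝ, MvPolynomial.aeval (phiF s)
      (MvPolynomial.C ((ct:ℝ):ℂ) * MvPolynomial.X 0 + MvPolynomial.C ((st:ℝ):ℂ) * MvPolynomial.X 1)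
      = MvPolynomial.C ((Real.cosh s * ct + Real.sinh s * st : ℝ) : ℂ) * MvPolynomial.X 0
        + MvPolynomial.C ((Real.sinh s * ct + Real.cosh s * st : ℝ) : ℂ) * MvPolynomial.X 1 := by
    intro ct st
    rw [map_add, map_mul, map_mul, aeval_C, aeval_C, aeval_X, aeval_X, algebraMap_eq]
    have e0 : phiF s 0 = MvPolynomial.C ((Real.cosh s : ℂ)) * MvPolynomial.X 0
        + MvPolynomial.C ((Real.sinh s : ℂ)) * MvPolynomial.X 1 := rfl
    have e1 : phiF s 1 = MvPolynomial.C ((Real.sinh s : ℂ)) * MvPolynomial.X 0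
        + MvPolynomial.C ((Real.cosh s : ℂ)) * MvPolynomial.X 1 := rfl
    rw [e0, e1]
    push_cast
    simp only [map_add, map_mul]
    ring
  funext i
  fin_cases i
  · show MvPolynomial.aeval (phiF s) (phiF t 0) = phiF (s+t) 0
    have l0 : phiF t 0 = MvPolynomial.C ((Real.cosh t : ℂ)) * MvPolynomial.X 0
        + MvPolynomial.C ((Real.sinh t : ℂ)) * MvPolynomial.X 1 := rfl
    have r0 : phiF (s+t) 0 = MvPolynomial.C ((Real.cosh (s+t) : ℂ)) * MvPolynomial.X 0
        + MvPolynomial.C ((Real.sinh (s+t) : ℂ)) * MvPolynomial.X 1 := rfl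
    rw [l0, r0, key (Real.cosh t) (Real.sinh t), Real.cosh_add, Real.sinh_add]
  · show MvPolynomial.aeval (phiF s) (phiF t 1) = phiF (s+t) 1
    have l1 : phiF t 1 = MvPolynomial.C ((Real.sinh t : ℂ)) * MvPolynomial.X 0
        + MvPolynomial.C ((Real.cosh t : ℂ)) * MvPolynomial.X 1 := rfl
    have r1 : phiF (s+t) 1 = MvPolynomial.C ((Real.sinh (s+t) : ℂ)) * MvPolynomial.X 0
        + MvPolynomial.C ((Real.cosh (s+t) : ℂ)) * MvPolynomial.X 1 := rfl
    rw [l1, r1, key (Real.sinh t) (Real.cosh t),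
      show Real.sinh (s+t) = Real.cosh s * Real.sinh t + Real.sinh s * Real.cosh t by
        rw [Real.sinh_add]; ring,
      show Real.cosh (s+t) = Real.sinh s * Real.sinh t + Real.cosh s * Real.cosh t by
        rw [Real.cosh_add]; ring]

lemma gtAction_comp (n : ℕ) (s t : ℝ) (p : ℕ → ℂ) :
    gtAction n s (gtAction n t p) = gtAction n (s + t) p := by
  have h1 : gtAction n s (gtAction n t p)
      = coeffVec n (MvPolynomial.aeval (phiF s) (polyOf n (gtAction n t p))) := rfl
  have h2 : gtAction n (s + t) p
      = coeffVec n (MvPolynomial.aeval (phiF (s+t)) (polyOf n p)) := rfl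
  rw [h1, h2, ← aeval_polyOf n t p]
  congr 1
  have h3 := MvPolynomial.comp_aeval (phiF t) (MvPolynomial.aeval (phiF s))
  have h4 := DFunLike.congr_fun h3 (polyOf n p)
  simp only [AlgHom.comp_apply] at h4
  rw [h4, phiF_comp]

lemma cfE_zero_eval (n k m : ℕ) (hk : k < 2*n) : cfE n k m 0 = if k = m then 1 else 0 := by
  rw [cfE]
  simp only [Real.cosh_zero, Real.sinh_zero, Complex.ofReal_one, Complex.ofReal_zero, one_pow,
    mul_one]
  by_cases h : k = m
  · subst h
    rw [if_pos rfl]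
    rw [Finset.sum_eq_single_of_mem k (mem_range.mpr (by omega))]
    · rw [Finset.sum_eq_single_of_mem 0 (mem_range.mpr (by omega))]
      · rw [if_pos (by omega)]
        simp
      · intro l hl hlne
        rw [if_neg (by omega)]
    · intro i hi hine
      have hi2 := mem_range.mp hi
      refine Finset.sum_eq_zero fun l hl => ?_
      split_ifs with hc
      · rw [zero_pow (by omega), mul_zero]
      · rfl
  · rw [if_neg h]
    refine Finset.sum_eq_zero fun i hi => Finset.sum_eq_zero fun l hl => ?_
    have hi2 := mem_range.mp hi
    split_ifs with hc
    · rw [zero_pow (by omega), mul_zero]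
    · rfl

lemma gtAction_zero_eq (n : ℕ) (p : ℕ → ℂ) (hvan : ∀ k, 2*n ≤ k → p k = 0) :
    gtAction n 0 p = p := by
  funext m
  rw [gtAction_eq]
  have hcong : ∀ k ∈ range (2*n), p k * cfE n k m 0 = if k = m then p k else 0 := by
    intro k hk
    rw [cfE_zero_eval n k m (mem_range.mp hk)]
    split_ifs <;> simp
  rw [Finset.sum_congr rfl hcong, Finset.sum_ite_eq' (range (2*n)) m (fun k => p k)]
  split_ifs with h
  · rfl
  · exact (hvan m (by simpa using h)).symm

lemma gtAction_vanish (n : ℕ) (t : ℝ) (p : ℕ → ℂ) (m : ℕ) (hm : 2*n ≤ m) :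
    gtAction n t p m = 0 := by
  rw [gtAction_eq]
  refine Finset.sum_eq_zero fun k hk => ?_
  have hk2 := mem_range.mp hk
  rw [cfE]
  rw [Finset.sum_eq_zero, mul_zero]
  intro i hi
  have hi2 := mem_range.mp hi
  refine Finset.sum_eq_zero fun l hl => ?_
  have hl2 := mem_range.mp hl
  rw [if_neg (by omega)]

lemma gtAction_ne_zero (n : ℕ) (t : ℝ) (p : ℕ → ℂ)
    (hvan : ∀ k, 2*n ≤ k → p k = 0) (hp : p ≠ 0) : gtAction n t p ≠ 0 := by
  intro h
  apply hp
  have h2 : gtAction n (-t) (gtAction n t p) = p := by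
    rw [gtAction_comp]
    simpa using gtAction_zero_eq n p hvan
  rw [h] at h2
  rw [← h2]
  funext m
  rw [gtAction_eq]
  simp

lemma hderiv_cosh : HasDerivAt (fun s : ℝ => ((Real.cosh s : ℂ))) 0 0 := by
  simpa using (Real.hasDerivAt_cosh 0).ofReal_comp

lemma hderiv_sinh : HasDerivAt (fun s : ℝ => ((Real.sinh s : ℂ))) 1 0 := by
  simpa using (Real.hasDerivAt_sinh 0).ofReal_comp

lemma hderiv_coshpow (a : ℕ) : HasDerivAt (fun s : ℝ => ((Real.cosh s : ℂ))^a) 0 0 := by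
  induction a with
  | zero => simpa using hasDerivAt_const (0:ℝ) (1:ℂ)
  | succ a ih =>
      have hfe : (fun s : ℝ => ((Real.cosh s:ℂ))^(a+1))
          = fun s => ((Real.cosh s:ℂ))^a * (Real.cosh s:ℂ) := by
        funext s; rw [pow_succ]
      rw [hfe]
      have h := ih.fun_mul hderiv_cosh
      convert h using 1
      · rfl
      simp

lemma hderiv_sinhpow (b : ℕ) :
    HasDerivAt (fun s : ℝ => ((Real.sinh s : ℂ))^b) (if b = 1 then 1 else 0) 0 := by
  induction b with
  | zero => simpa using hasDerivAt_const (0:ℝ) (1:ℂ)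
  | succ b ih =>
      have hfe : (fun s : ℝ => ((Real.sinh s:ℂ))^(b+1))
          = fun s => ((Real.sinh s:ℂ))^b * (Real.sinh s:ℂ) := by
        funext s; rw [pow_succ]
      rw [hfe]
      have h := ih.fun_mul hderiv_sinh
      convert h using 1
      · rfl
      simp only [Real.sinh_zero, Complex.ofReal_zero, mul_zero, mul_one, zero_add]
      rcases b with _ | b
      · simp
      · simp

lemma hasDerivAt_cs (a b : ℕ) :
    HasDerivAt (fun s : ℝ => ((Real.cosh s : ℂ))^a * ((Real.sinh s : ℂ))^b)
      (if b = 1 then 1 else 0) 0 := by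
  have h := (hderiv_coshpow a).fun_mul (hderiv_sinhpow b)
  convert h using 1
  · rfl
  simp

lemma hasDerivAt_cfE (n k m : ℕ) :
    HasDerivAt (cfE n k m)
      (∑ i ∈ range (k+1), ∑ l ∈ range (2*n-k),
        if i + l = m then ((k.choose i * (2*n-1-k).choose l : ℕ) : ℂ)
          * (if (k-i)+l = 1 then 1 else 0) else 0) 0 := by
  have hfe : cfE n k m = fun t => ∑ i ∈ range (k+1), ∑ l ∈ range (2*n-k),
      if i + l = m then ((k.choose i * (2*n-1-k).choose l : ℕ) : ℂ)
        * (((Real.cosh t : ℂ))^(i + (2*n-1-k-l)) * ((Real.sinh t : ℂ))^((k-i) + l)) else 0 := by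
    funext t
    rw [cfE]
    exact Finset.sum_congr rfl fun i _ => Finset.sum_congr rfl fun l _ =>
      if_congr Iff.rfl (by ring) rfl
  rw [hfe]
  refine HasDerivAt.fun_sum fun i _ => HasDerivAt.fun_sum fun l _ => ?_
  by_cases h : i + l = m
  · simp only [if_pos h]
    exact (hasDerivAt_cs (i + (2*n-1-k-l)) ((k-i)+l)).const_mul
      (((k.choose i * (2*n-1-k).choose l : ℕ) : ℂ))
  · simp only [if_neg h]
    exact hasDerivAt_const _ _

lemma deriv_sum_eq (n : ℕ) (q : ℕ → ℂ) (hq : ∀ k, 2*n ≤ k → q k = 0) (m : ℕ) :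
    ∑ k ∈ range (2*n), q k * (∑ i ∈ range (k+1), ∑ l ∈ range (2*n-k),
        if i + l = m then ((k.choose i * (2*n-1-k).choose l : ℕ) : ℂ)
          * (if (k-i)+l = 1 then 1 else 0) else 0)
      = gZero n q m := by
  have key : ∀ k ∈ range (2*n), q k * (∑ i ∈ range (k+1), ∑ l ∈ range (2*n-k),
      if i + l = m then ((k.choose i * (2*n-1-k).choose l : ℕ) : ℂ)
        * (if (k-i)+l = 1 then 1 else 0) else 0)
      = q k * ((if k = m+1 then ((m:ℂ)+1) else 0)
          + (if k+1 = m ∧ k+2 ≤ 2*n then ((2*n:ℂ)-1-(k:ℂ)) else 0)) := by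
    intro k hk
    have hk2 := mem_range.mp hk
    congr 1
    by_cases h1 : k = m+1
    · subst h1
      rw [if_pos rfl, if_neg (by omega), add_zero]
      rw [Finset.sum_eq_single_of_mem m (mem_range.mpr (by omega))]
      · rw [Finset.sum_eq_single_of_mem 0 (mem_range.mpr (by omega))]
        · rw [if_pos (by omega), if_pos (by omega)]
          rw [Nat.choose_succ_self_right, Nat.choose_zero_right]
          push_cast
          ring
        · intro l hl hlne
          rw [if_neg (by omega)]
      · intro i hi hine
        have hi2 := mem_range.mp hi
        refine Finset.sum_eq_zero fun l hl => ?_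
        have hl2 := mem_range.mp hl
        by_cases hc : i + l = m
        · rw [if_pos hc, if_neg (by omega), mul_zero]
        · rw [if_neg hc]
    · by_cases h2 : k+1 = m ∧ k+2 ≤ 2*n
      · rw [if_neg h1, if_pos h2, zero_add]
        obtain ⟨h2a, h2b⟩ := h2
        rw [Finset.sum_eq_single_of_mem k (mem_range.mpr (by omega))]
        · rw [Finset.sum_eq_single_of_mem 1 (mem_range.mpr (by omega))]
          · rw [if_pos (by omega), if_pos (by omega)]
            have hcast : (((2*n-1-k : ℕ)) : ℂ) = (2*n:ℂ)-1-(k:ℂ) := by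
              have e1 : (2*n-1-k : ℕ) = 2*n - (1+k) := by omega
              rw [e1, Nat.cast_sub (by omega)]
              push_cast
              ring
            rw [Nat.choose_self, Nat.choose_one_right, one_mul, mul_one, hcast]
          · intro l hl hlne
            have hl2 := mem_range.mp hl
            by_cases hc : k + l = m
            · rw [if_pos hc, if_neg (by omega), mul_zero]
            · rw [if_neg hc]
        · intro i hi hine
          have hi2 := mem_range.mp hi
          refine Finset.sum_eq_zero fun l hl => ?_
          have hl2 := mem_range.mp hl
          by_cases hc : i + l = m
          · rw [if_pos hc, if_neg (by omega), mul_zero]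
          · rw [if_neg hc]
      · rw [if_neg h1, if_neg h2, add_zero]
        refine Finset.sum_eq_zero fun i hi => Finset.sum_eq_zero fun l hl => ?_
        have hi2 := mem_range.mp hi
        have hl2 := mem_range.mp hl
        by_cases hc : i + l = m
        · rw [if_pos hc, if_neg (by omega), mul_zero]
        · rw [if_neg hc]
  rw [Finset.sum_congr rfl key]
  simp only [mul_add]
  rw [Finset.sum_add_distrib]
  have e1 : ∑ k ∈ range (2*n), q k * (if k = m+1 then ((m:ℂ)+1) else 0)
      = ((m:ℂ)+1) * q (m+1) := by
    simp only [mul_ite, mul_zero]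
    rw [Finset.sum_ite_eq' (range (2*n)) (m+1) (fun k => q k * ((m:ℂ)+1))]
    split_ifs with h
    · ring
    · rw [hq (m+1) (by simpa using h)]
      ring
  have e2 : ∑ k ∈ range (2*n), q k * (if k+1 = m ∧ k+2 ≤ 2*n then ((2*n:ℂ)-1-(k:ℂ)) else 0)
      = ((2*n : ℂ) - (m:ℂ)) * (if m = 0 then 0 else q (m-1)) := by
    by_cases hm0 : m = 0
    · subst hm0
      rw [if_pos rfl, mul_zero]
      refine Finset.sum_eq_zero fun k hk => ?_
      rw [if_neg (by omega), mul_zero]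
    · rw [if_neg hm0]
      by_cases hm2 : m + 1 ≤ 2*n
      · have hcong : ∀ k ∈ range (2*n), q k * (if k+1 = m ∧ k+2 ≤ 2*n then ((2*n:ℂ)-1-(k:ℂ)) else 0)
            = if k = m-1 then q k * ((2*n:ℂ)-1-(k:ℂ)) else 0 := by
          intro k hk
          have := mem_range.mp hk
          by_cases h : k = m - 1
          · rw [if_pos h, if_pos (by omega), h]
          · rw [if_neg h, if_neg (by omega), mul_zero]
        rw [Finset.sum_congr rfl hcong,
          Finset.sum_ite_eq' (range (2*n)) (m-1) (fun k => q k * ((2*n:ℂ)-1-(k:ℂ)))]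
        rw [if_pos (mem_range.mpr (by omega))]
        have : ((m-1 : ℕ) : ℂ) = (m:ℂ) - 1 := by
          rw [Nat.cast_sub (by omega)]
          push_cast
          ring
        rw [this]
        ring
      · have hz : ∑ k ∈ range (2*n), q k * (if k+1 = m ∧ k+2 ≤ 2*n then ((2*n:ℂ)-1-(k:ℂ)) else 0)
            = 0 := by
          refine Finset.sum_eq_zero fun k hk => ?_
          have := mem_range.mp hk
          rw [if_neg (by omega), mul_zero]
        rw [hz]
        by_cases hm3 : m = 2*n
        · subst hm3
          push_cast
          ring
        · rw [hq (m-1) (by omega)]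
          ring
  rw [e1, e2, gZero]

lemma hasDerivAt_coord (n : ℕ) (q : ℕ → ℂ) (hq : ∀ k, 2*n ≤ k → q k = 0) (m : ℕ) :
    HasDerivAt (fun s => gtAction n s q m) (gZero n q m) 0 := by
  have hfe : (fun s => gtAction n s q m) = fun s => ∑ k ∈ range (2*n), q k * cfE n k m s :=
    funext fun s => gtAction_eq n s q m
  rw [hfe, ← deriv_sum_eq n q hq m]
  exact HasDerivAt.fun_sum fun k _ => (hasDerivAt_cfE n k m).const_mul (q k)

lemma qForm_comm (n : ℕ) (lam : ℕ → ℝ) (p q : ℕ → ℂ) :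
    qForm n lam p q = qForm n lam q p := by
  rw [qForm, qForm]
  congr 1
  exact Finset.sum_congr rfl fun k _ => by ring

lemma hasDerivAt_main (n : ℕ) (lam : ℕ → ℝ) (r : ℕ → ℂ) (hr : ∀ k, 2*n ≤ k → r k = 0) :
    HasDerivAt (fun s => (qForm n lam (gtAction n s r) (gtAction n s r)).re)
      (2 * (qForm n lam r (gZero n r)).re) 0 := by
  set w := gZero n r with hw
  have hco : ∀ m, HasDerivAt (fun s => gtAction n s r m) (w m) 0 := hasDerivAt_coord n r hr
  have hval : ∀ m, gtAction n 0 r m = r m := fun m => congrFun (gtAction_zero_eq n r hr) m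
  have hterm : ∀ k : ℕ, HasDerivAt
      (fun s => gtAction n s r (2*k) * (starRingEnd ℂ) (gtAction n s r (2*k+1)))
      (w (2*k) * (starRingEnd ℂ) (r (2*k+1)) + r (2*k) * (starRingEnd ℂ) (w (2*k+1))) 0 := by
    intro k
    have hstar : HasDerivAt (fun s => (starRingEnd ℂ) (gtAction n s r (2*k+1)))
        ((starRingEnd ℂ) (w (2*k+1))) 0 := (hco (2*k+1)).star
    have h1 := (hco (2*k)).mul hstar
    rw [hval (2*k+1), hval (2*k)] at h1
    exact h1
  have hq : HasDerivAt (fun s => qForm n lam (gtAction n s r) (gtAction n s r))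
      ((1/2 : ℂ) * ∑ k ∈ range n, (lam k : ℂ)
        * ((w (2*k) * (starRingEnd ℂ) (r (2*k+1)) + r (2*k) * (starRingEnd ℂ) (w (2*k+1)))
          + (w (2*k) * (starRingEnd ℂ) (r (2*k+1)) + r (2*k) * (starRingEnd ℂ) (w (2*k+1))))) 0 := by
    simp only [qForm]
    exact HasDerivAt.const_mul _ (HasDerivAt.fun_sum fun k _ =>
      HasDerivAt.const_mul _ ((hterm k).add (hterm k)))
  have hD : ((1/2 : ℂ) * ∑ k ∈ range n, (lam k : ℂ)
        * ((w (2*k) * (starRingEnd ℂ) (r (2*k+1)) + r (2*k) * (starRingEnd ℂ) (w (2*k+1)))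
          + (w (2*k) * (starRingEnd ℂ) (r (2*k+1)) + r (2*k) * (starRingEnd ℂ) (w (2*k+1)))))
      = qForm n lam w r + qForm n lam r w := by
    rw [qForm, qForm, ← mul_add, ← Finset.sum_add_distrib]
    exact congrArg _ (Finset.sum_congr rfl fun k _ => by ring)
  rw [hD] at hq
  have hre := (Complex.reCLM.hasFDerivAt).comp_hasDerivAt 0 hq
  have hre2 : HasDerivAt (fun s => (qForm n lam (gtAction n s r) (gtAction n s r)).re)
      ((qForm n lam w r + qForm n lam r w).re) 0 := hre
  have : (qForm n lam w r + qForm n lam r w).re = 2 * (qForm n lam r w).re := by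
    rw [qForm_comm n lam w r, Complex.add_re]
    ring
  rw [this] at hre2
  exact hre2


/-- If `λ ∈ ℝ_{>0}^n` is transverse to `𝐠₀`, then for every nonzero `P`, the function
`t ↦ Re(q_λ(g_t·P, g_t·P))` is strictly increasing on `ℝ`. -/
theorem qForm_strictMono_along_flow (n : ℕ) (hn : 1 ≤ n)
    (lam : ℕ → ℝ) (hpos : ∀ k < n, 0 < lam k)
    (htrans : ∀ p : ℕ → ℂ, (∀ k, 2*n ≤ k → p k = 0) → p ≠ 0 →
      0 < (qForm n lam p (gZero n p)).re)
    (p : ℕ → ℂ) (hvan : ∀ k, 2*n ≤ k → p k = 0) (hp : p ≠ 0) :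
    StrictMono (fun t : ℝ => (qForm n lam (gtAction n t p) (gtAction n t p)).re) := by
  apply strictMono_of_deriv_pos
  intro t0
  set r := gtAction n t0 p with hr
  have hrv : ∀ k, 2*n ≤ k → r k = 0 := fun k hk => gtAction_vanish n t0 p k hk
  have hrne : r ≠ 0 := gtAction_ne_zero n t0 p hvan hp
  have hd0 := hasDerivAt_main n lam r hrv
  have hfun : (fun s : ℝ => (qForm n lam (gtAction n s r) (gtAction n s r)).re)
      = (fun t : ℝ => (qForm n lam (gtAction n t p) (gtAction n t p)).re)
        ∘ (fun s : ℝ => s + t0) := by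
    funext s
    show (qForm n lam (gtAction n s r) (gtAction n s r)).re
      = (qForm n lam (gtAction n (s + t0) p) (gtAction n (s + t0) p)).re
    rw [hr, gtAction_comp]
  rw [hfun] at hd0
  have hsub : HasDerivAt (fun x : ℝ => x - t0) 1 t0 := (hasDerivAt_id t0).sub_const t0
  have hzero : t0 - t0 = 0 := sub_self t0
  have hd1 : HasDerivAt
      ((((fun t : ℝ => (qForm n lam (gtAction n t p) (gtAction n t p)).re)
        ∘ (fun s : ℝ => s + t0))) ∘ (fun x : ℝ => x - t0))
      (2 * (qForm n lam r (gZero n r)).re * 1) t0 :=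
    HasDerivAt.comp t0 (by rw [hzero]; exact hd0) hsub
  have hfun2 : ((((fun t : ℝ => (qForm n lam (gtAction n t p) (gtAction n t p)).re)
        ∘ (fun s : ℝ => s + t0))) ∘ (fun x : ℝ => x - t0))
      = (fun t : ℝ => (qForm n lam (gtAction n t p) (gtAction n t p)).re) := by
    funext x
    show (qForm n lam (gtAction n (x - t0 + t0) p) (gtAction n (x - t0 + t0) p)).re = _
    rw [sub_add_cancel]
  rw [hfun2, mul_one] at hd1
  rw [hd1.deriv]
  have hpos2 := htrans r hrv hrne
  linarith
end
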